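/- Let K be a field equipped with a ring involution x ↦ x̄ (star of a commutative StarRing on K), and let O be a subring of K stable under the involution, with 2 a unit in O. Let 1 ≤ m ≤ n and let a₁,…,aₘ,d ∈ Kˣ satisfy aⱼ·aⱼ₊₁⁻¹ ∈ O for 1 ≤ j ≤ m−1, aₘ·ā_m ∈ O, aₘ·d⁻¹ ∈ O, and d·d̄ ∈ O. Set T = diag(a₁,…,aₘ,ā₁⁻¹,…,āₘ⁻¹) ∈ GL₂ₘ(K) and A = diag(a₁,…,aₘ,d,…,d) ∈ GLₙ(K). Then the following two subsets of the 2m×n matrices over K are equal: (i) U⁻_{H,O} · T⁻¹ · 𝒱 · Bₙ(O), and (ii) the set of X with Xᴴ·J₂ₘ·X ∈ Mₙ(O) intersected with U⁻_{H,O} · 𝒱 · A⁻¹ · Bₙ(O), where Xᴴ denotes the conjugate transpose of X with respect to the involution. -/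

import Mathlib

open Matrix

/-- Every entry of the matrix lies in the subring `O`. -/
def MemO {K : Type*} [Field K] {α β : Type*} (O : Subring K) (M : Matrix α β K) : Prop :=
  ∀ i j, M i j ∈ O

/-- The matrix `J₂ₘ = [[0,1ₘ],[1ₘ,0]]`. -/
def Jmat (K : Type*) [Field K] (m : ℕ) : Matrix (Fin m ⊕ Fin m) (Fin m ⊕ Fin m) K :=
  Matrix.fromBlocks 0 1 1 0

/-- Position of an index of `Fin m ⊕ Fin r` in the concatenated ordering. -/
def idx (m : ℕ) {r : ℕ} : Fin m ⊕ Fin r → ℕ :=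
  Sum.elim (fun i => (i : ℕ)) (fun j => m + (j : ℕ))

/-- `Bₙ(O)`: upper-triangular matrices with entries in `O` and diagonal entries units of `O`,
on the index type `Fin m ⊕ Fin r` with its concatenated ordering. -/
def BO {K : Type*} [Field K] (O : Subring K) (m r : ℕ) :
    Set (Matrix (Fin m ⊕ Fin r) (Fin m ⊕ Fin r) K) :=
  {b | MemO O b ∧ (∀ p q, idx m q < idx m p → b p q = 0) ∧
    ∀ p, ∃ c ∈ O, b p p * c = 1}

/-- `U⁻_{H,O}` in the unitary case: matrices over `O` of block shape `[[A,0],[C,D]]` with `A`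
lower-triangular unipotent, preserving the split Hermitian form `J₂ₘ`. -/
def UnegHStar {K : Type*} [Field K] [StarRing K] (O : Subring K) (m : ℕ) :
    Set (Matrix (Fin m ⊕ Fin m) (Fin m ⊕ Fin m) K) :=
  {g | MemO O g ∧ (∀ i j, g (Sum.inl i) (Sum.inr j) = 0) ∧
    (∀ i j : Fin m, (i : ℕ) < (j : ℕ) → g (Sum.inl i) (Sum.inl j) = 0) ∧
    (∀ i, g (Sum.inl i) (Sum.inl i) = 1) ∧
    gᴴ * Jmat K m * g = Jmat K m}

/-- `𝒱` : block matrices `[[1ₘ,0],[Z₃,Z₄]]` with `Z₃, Z₄` over `O`. -/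
def Vcal {K : Type*} [Field K] (O : Subring K) (m r : ℕ) :
    Set (Matrix (Fin m ⊕ Fin m) (Fin m ⊕ Fin r) K) :=
  {V | ∃ (Z₃ : Matrix (Fin m) (Fin m) K) (Z₄ : Matrix (Fin m) (Fin r) K),
    MemO O Z₃ ∧ MemO O Z₄ ∧ V = Matrix.fromBlocks 1 0 Z₃ Z₄}

section Aux
variable {K : Type*} [Field K] {O : Subring K}

lemma memO_mul {α β γ : Type*} [Fintype β] {M : Matrix α β K} {N : Matrix β γ K}
    (hM : MemO O M) (hN : MemO O N) : MemO O (M * N) := fun i j => by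
  rw [Matrix.mul_apply]; exact Subring.sum_mem _ fun k _ => mul_mem (hM i k) (hN k j)

lemma memO_conjTranspose [StarRing K] (hOstar : ∀ x ∈ O, star x ∈ O) {α β : Type*}
    {M : Matrix α β K} (hM : MemO O M) : MemO O Mᴴ := fun i j => hOstar _ (hM j i)

lemma memO_one {α : Type*} [DecidableEq α] : MemO O (1 : Matrix α α K) := fun i j => by
  rw [Matrix.one_apply]; split_ifs; exacts [O.one_mem, O.zero_mem]

lemma memO_zero {α β : Type*} : MemO O (0 : Matrix α β K) := fun _ _ => O.zero_mem

lemma memO_fromBlocks {α β γ δ : Type*} {A : Matrix α β K} {B : Matrix α δ K}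
    {C : Matrix γ β K} {D : Matrix γ δ K} (hA : MemO O A) (hB : MemO O B)
    (hC : MemO O C) (hD : MemO O D) : MemO O (Matrix.fromBlocks A B C D) := by
  rintro (i | i) (j | j)
  exacts [hA i j, hB i j, hC i j, hD i j]

lemma memO_add {α β : Type*} {M N : Matrix α β K} (hM : MemO O M) (hN : MemO O N) :
    MemO O (M + N) := fun i j => add_mem (hM i j) (hN i j)

lemma diag_mul_inv_self {ι : Type*} [Fintype ι] [DecidableEq ι] (v : ι → K)
    (hv : ∀ i, v i ≠ 0) :
    Matrix.diagonal v * Matrix.diagonal (fun i => (v i)⁻¹) = 1 := by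
  rw [Matrix.diagonal_mul_diagonal,
    show (fun i => v i * (v i)⁻¹) = fun _ => (1 : K) from funext fun i => mul_inv_cancel₀ (hv i),
    Matrix.diagonal_one]

lemma diag_inv_mul_self {ι : Type*} [Fintype ι] [DecidableEq ι] (v : ι → K)
    (hv : ∀ i, v i ≠ 0) :
    Matrix.diagonal (fun i => (v i)⁻¹) * Matrix.diagonal v = 1 := by
  rw [Matrix.diagonal_mul_diagonal,
    show (fun i => (v i)⁻¹ * v i) = fun _ => (1 : K) from funext fun i => inv_mul_cancel₀ (hv i),
    Matrix.diagonal_one]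

lemma sandwich [StarRing K] {ι κ : Type*} [Fintype ι] [Fintype κ]
    (u J' : Matrix ι ι K) (W : Matrix ι κ K) (b : Matrix κ κ K)
    (hu : uᴴ * J' * u = J') :
    (u * W * b)ᴴ * J' * (u * W * b) = bᴴ * (Wᴴ * J' * W) * b := by
  have h : ∀ Y : Matrix ι κ K, uᴴ * (J' * (u * Y)) = J' * Y := fun Y => by
    rw [← Matrix.mul_assoc, ← Matrix.mul_assoc, hu]
  simp only [Matrix.conjTranspose_mul, Matrix.mul_assoc, h]

lemma herm_form [StarRing K] {m r : ℕ} (P Q : Matrix (Fin m) (Fin m) K)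
    (R : Matrix (Fin m) (Fin r) K) :
    (Matrix.fromBlocks P 0 Q R)ᴴ * Jmat K m * (Matrix.fromBlocks P 0 Q R)
      = Matrix.fromBlocks (Qᴴ * P + Pᴴ * Q) (Pᴴ * R) (Rᴴ * P) 0 := by
  rw [Jmat, Matrix.fromBlocks_conjTranspose, Matrix.fromBlocks_multiply,
    Matrix.fromBlocks_multiply]
  simp

lemma bo_inv {m r : ℕ} {b : Matrix (Fin m ⊕ Fin r) (Fin m ⊕ Fin r) K}
    (hb : b ∈ BO O m r) :
    ∃ c : Matrix (Fin m ⊕ Fin r) (Fin m ⊕ Fin r) K,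
      MemO O c ∧ b * c = 1 ∧ c * b = 1 := by
  obtain ⟨hmem, htri, hdiag⟩ := hb
  let b₀ : Matrix (Fin m ⊕ Fin r) (Fin m ⊕ Fin r) O := fun i j => ⟨b i j, hmem i j⟩
  have hre : ∀ p : Fin m ⊕ Fin r, ((finSumFinEquiv p : Fin (m + r)) : ℕ) = idx m p := by
    rintro (i | j) <;> simp [idx]
  have hb₀ : IsUnit b₀ := by
    rw [Matrix.isUnit_iff_isUnit_det]
    rw [← Matrix.det_submatrix_equiv_self finSumFinEquiv.symm b₀]
    have htri' : (b₀.submatrix finSumFinEquiv.symm finSumFinEquiv.symm).BlockTriangular id := by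
      intro i j hij
      apply Subtype.ext
      show b (finSumFinEquiv.symm i) (finSumFinEquiv.symm j) = 0
      apply htri
      rw [← hre, ← hre]
      simpa using hij
    rw [Matrix.det_of_upperTriangular htri']
    apply Finset.prod_induction _ IsUnit (fun x y hx hy => hx.mul hy) isUnit_one
    intro i _
    obtain ⟨c, hc, hbc⟩ := hdiag (finSumFinEquiv.symm i)
    exact IsUnit.of_mul_eq_one (⟨c, hc⟩ : O) (Subtype.ext hbc)
  obtain ⟨v, hv⟩ := hb₀
  have hmap : b₀.map O.subtype = b := by ext i j; rfl
  have h1 : b₀ * (↑(v⁻¹) : Matrix _ _ O) = 1 := by rw [← hv]; exact v.mul_inv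
  have h2 : (↑(v⁻¹) : Matrix _ _ O) * b₀ = 1 := by rw [← hv]; exact v.inv_mul
  refine ⟨(↑(v⁻¹) : Matrix _ _ O).map O.subtype,
    fun i j => by rw [Matrix.map_apply]; exact SetLike.coe_mem _, ?_, ?_⟩
  · rw [← hmap, ← Matrix.map_mul, h1]
    exact Matrix.map_one _ (map_zero _) (map_one _)
  · rw [← hmap, ← Matrix.map_mul, h2]
    exact Matrix.map_one _ (map_zero _) (map_one _)
end Aux

section Aux2
variable {K : Type*} [Field K] [StarRing K] {O : Subring K}

lemma uneg_mul_unipotent {m : ℕ} {u : Matrix (Fin m ⊕ Fin m) (Fin m ⊕ Fin m) K}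
    (hu : u ∈ UnegHStar O m) {C : Matrix (Fin m) (Fin m) K} (hC : MemO O C)
    (hCs : C + Cᴴ = 0) :
    u * Matrix.fromBlocks 1 0 C 1 ∈ UnegHStar O m := by
  obtain ⟨hmem, hur, hlow, hdiag, hform⟩ := hu
  set g : Matrix (Fin m ⊕ Fin m) (Fin m ⊕ Fin m) K := Matrix.fromBlocks 1 0 C 1 with hg
  have hgmem : MemO O g := memO_fromBlocks memO_one memO_zero hC memO_one
  have hrow : ∀ (i : Fin m) (q : Fin m ⊕ Fin m), (u * g) (Sum.inl i) q = u (Sum.inl i) q := by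
    intro i q
    rw [Matrix.mul_apply, Fintype.sum_sum_type]
    cases q with
    | inl j =>
      simp [hg, hur, Matrix.one_apply, mul_ite, Finset.sum_ite_eq']
    | inr j =>
      simp [hg, hur]
  have hgform : gᴴ * Jmat K m * g = Jmat K m := by
    rw [hg, herm_form]
    have h1 : Cᴴ * 1 + (1 : Matrix (Fin m) (Fin m) K)ᴴ * C = 0 := by
      rw [Matrix.mul_one, Matrix.conjTranspose_one, Matrix.one_mul, add_comm]; exact hCs
    rw [h1, Jmat]
    simp
  refine ⟨memO_mul hmem hgmem, fun i j => by rw [hrow]; exact hur i j,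
    fun i j h => by rw [hrow]; exact hlow i j h, fun i => by rw [hrow]; exact hdiag i, ?_⟩
  have h : ∀ Y : Matrix (Fin m ⊕ Fin m) (Fin m ⊕ Fin m) K,
      uᴴ * (Jmat K m * (u * Y)) = Jmat K m * Y := fun Y => by
    rw [← Matrix.mul_assoc, ← Matrix.mul_assoc, hform]
  simp only [Matrix.conjTranspose_mul, Matrix.mul_assoc, h]
  rw [← Matrix.mul_assoc]
  exact hgform
end Aux2

section Aux3
variable {K : Type*} [Field K] [StarRing K]

lemma lemA {m : ℕ} (v : Fin m → K) (hv : ∀ i, v i ≠ 0) {β : Type*} (M : Matrix (Fin m) β K) :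
    ((Matrix.diagonal fun i => star (v i)) * M)ᴴ * (Matrix.diagonal fun i => (v i)⁻¹) = Mᴴ := by
  ext i j
  simp only [Matrix.mul_diagonal, Matrix.conjTranspose_apply, Matrix.diagonal_mul, star_mul',
    star_star]
  rw [mul_comm (v j), mul_assoc, mul_inv_cancel₀ (hv j), mul_one]

lemma lemB {m : ℕ} (v : Fin m → K) (hsv : ∀ i, star (v i) ≠ 0) {β : Type*}
    (M : Matrix (Fin m) β K) :
    (Matrix.diagonal fun i => (v i)⁻¹)ᴴ * ((Matrix.diagonal fun i => star (v i)) * M) = M := by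
  rw [Matrix.diagonal_conjTranspose]
  ext i j
  simp only [Matrix.diagonal_mul, Pi.star_apply, star_inv₀]
  rw [← mul_assoc, inv_mul_cancel₀ (hsv i), one_mul]

end Aux3

set_option maxHeartbeats 4000000 in
/-- The measure-free core of Theorem 2.5 (Case U0): equality of the supports of the two
`Uₚ`-averaged Schwartz functions, in the even quasi-split unitary case. -/
theorem support_equality_U0 {K : Type*} [Field K] [StarRing K] (O : Subring K)
    (hOstar : ∀ x ∈ O, star x ∈ O) (h2 : IsUnit (2 : O))
    (m n : ℕ) (hm : 1 ≤ m) (hmn : m ≤ n)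
    (a : Fin m → Kˣ) (d : Kˣ)
    (hstep : ∀ i j : Fin m, (i : ℕ) + 1 = (j : ℕ) → (a i : K) * ((a j : K))⁻¹ ∈ O)
    (hlast : (a ⟨m - 1, by omega⟩ : K) * star (a ⟨m - 1, by omega⟩ : K) ∈ O)
    (had : (a ⟨m - 1, by omega⟩ : K) * ((d : K))⁻¹ ∈ O)
    (hd2 : (d : K) * star (d : K) ∈ O) :
    {X : Matrix (Fin m ⊕ Fin m) (Fin m ⊕ Fin (n - m)) K |
        ∃ u ∈ UnegHStar O m, ∃ V ∈ Vcal O m (n - m), ∃ b ∈ BO O m (n - m),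
          X = u * (Matrix.fromBlocks (Matrix.diagonal fun i => (a i : K)) 0 0
              (Matrix.diagonal fun i => (star (a i : K))⁻¹))⁻¹ * V * b} =
      {X | MemO O (Xᴴ * Jmat K m * X)} ∩
        {X | ∃ u ∈ UnegHStar O m, ∃ V ∈ Vcal O m (n - m), ∃ b ∈ BO O m (n - m),
          X = u * V * (Matrix.diagonal
              (Sum.elim (fun i => (a i : K)) (fun _ : Fin (n - m) => (d : K))))⁻¹ * b} := by
  have haK : ∀ i, (a i : K) ≠ 0 := fun i => (a i).ne_zero
  have hsaK : ∀ i, star (a i : K) ≠ 0 := fun i => by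
    simpa [star_eq_zero] using (a i).ne_zero
  have hdK : (d : K) ≠ 0 := d.ne_zero
  have hsdK : star (d : K) ≠ 0 := by simpa [star_eq_zero] using d.ne_zero
  -- scalar facts
  have achain : ∀ k : ℕ, ∀ i j : Fin m, (j : ℕ) = (i : ℕ) + k →
      (a i : K) * (a j : K)⁻¹ ∈ O := by
    intro k
    induction k with
    | zero =>
      intro i j h
      have : i = j := Fin.ext (by omega)
      subst this
      rw [mul_inv_cancel₀ (haK i)]
      exact O.one_mem
    | succ k ih =>
      intro i j h
      have hj := j.isLt
      have hi1 : (i : ℕ) + 1 < m := by omega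
      have h1 := hstep i ⟨(i : ℕ) + 1, hi1⟩ rfl
      have h2' := ih ⟨(i : ℕ) + 1, hi1⟩ j (by show (j : ℕ) = (i : ℕ) + 1 + k; omega)
      have hmid := haK ⟨(i : ℕ) + 1, hi1⟩
      have heq : (a i : K) * (a j : K)⁻¹
          = ((a i : K) * (a ⟨(i : ℕ) + 1, hi1⟩ : K)⁻¹)
            * ((a ⟨(i : ℕ) + 1, hi1⟩ : K) * (a j : K)⁻¹) := by
        field_simp
      rw [heq]
      exact mul_mem h1 h2'
  have hdiv : ∀ i j : Fin m, (i : ℕ) ≤ (j : ℕ) → (a i : K) * (a j : K)⁻¹ ∈ O :=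
    fun i j h => achain ((j : ℕ) - (i : ℕ)) i j (by omega)
  have hiL : ∀ i : Fin m, (i : ℕ) ≤ ((⟨m - 1, by omega⟩ : Fin m) : ℕ) := fun i => by
    have := i.isLt
    show (i : ℕ) ≤ m - 1
    omega
  have hstar1 : ∀ i : Fin m, star (a i : K) * (star (a ⟨m - 1, by omega⟩ : K))⁻¹ ∈ O := by
    intro i
    have := hOstar _ (hdiv i ⟨m - 1, by omega⟩ (hiL i))
    rwa [star_mul', star_inv₀] at this
  have haa : ∀ i j : Fin m, star (a i : K) * (a j : K) ∈ O := by
    intro i j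
    have h1 := hstar1 i
    have h3 := hdiv j ⟨m - 1, by omega⟩ (hiL j)
    have h4 := hsaK ⟨m - 1, by omega⟩
    have h5 := haK ⟨m - 1, by omega⟩
    have heq : star (a i : K) * (a j : K)
        = (star (a i : K) * (star (a ⟨m - 1, by omega⟩ : K))⁻¹)
          * ((a ⟨m - 1, by omega⟩ : K) * star (a ⟨m - 1, by omega⟩ : K))
          * ((a j : K) * (a ⟨m - 1, by omega⟩ : K)⁻¹) := by
      field_simp
    rw [heq]
    exact mul_mem (mul_mem h1 hlast) h3
  have had' : ∀ i : Fin m, star (a i : K) * (d : K) ∈ O := by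
    intro i
    have h1 := hstar1 i
    have h4 : star (a ⟨m - 1, by omega⟩ : K) * (star (d : K))⁻¹ ∈ O := by
      have := hOstar _ had
      rwa [star_mul', star_inv₀] at this
    have h5 := hsaK ⟨m - 1, by omega⟩
    have heq : star (a i : K) * (d : K)
        = (star (a i : K) * (star (a ⟨m - 1, by omega⟩ : K))⁻¹)
          * (star (a ⟨m - 1, by omega⟩ : K) * (star (d : K))⁻¹)
          * ((d : K) * star (d : K)) := by
      field_simp
    rw [heq]
    exact mul_mem (mul_mem h1 h4) hd2
  -- the half
  obtain ⟨w, hw⟩ := h2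
  have htO : ((↑(w⁻¹) : O) : K) ∈ O := SetLike.coe_mem _
  set t : K := ((↑(w⁻¹) : O) : K) with htdef
  have h2t : (2 : K) * t = 1 := by
    have h2t' : (2 : O) * ↑(w⁻¹) = 1 := by rw [← hw]; exact w.mul_inv
    have h := congrArg (fun x : O => (x : K)) h2t'
    push_cast at h
    rw [show ((2 : O) : K) = 2 from map_ofNat O.subtype 2] at h
    exact h
  have hstart : star t = t := by
    have h1 : (2 : K) * star t = 1 := by
      have := congrArg star h2t
      rwa [star_mul', star_ofNat, star_one] at this
    have h20 : (2 : K) ≠ 0 := by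
      intro h
      rw [h, zero_mul] at h2t
      exact one_ne_zero h2t.symm
    exact mul_left_cancel₀ h20 (by rw [h1, h2t])
  -- diagonal matrix facts
  have hDaDai : (Matrix.diagonal fun i => (a i : K)) * (Matrix.diagonal fun i => ((a i : K))⁻¹) = 1 := diag_mul_inv_self _ haK
  have hDaiDa : (Matrix.diagonal fun i => ((a i : K))⁻¹) * (Matrix.diagonal fun i => (a i : K)) = 1 := diag_inv_mul_self _ haK
  have hDasDasi : (Matrix.diagonal fun i => star (a i : K)) * (Matrix.diagonal fun i => (star (a i : K))⁻¹) = 1 := diag_mul_inv_self _ hsaK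
  have hDasiDas : (Matrix.diagonal fun i => (star (a i : K))⁻¹) * (Matrix.diagonal fun i => star (a i : K)) = 1 := diag_inv_mul_self _ hsaK
  have hDdDdi : (Matrix.diagonal fun _ : Fin (n - m) => (d : K)) * (Matrix.diagonal fun _ : Fin (n - m) => ((d : K))⁻¹) = 1 := diag_mul_inv_self _ (fun _ => hdK)
  have hDaiH : ((Matrix.diagonal fun i => ((a i : K))⁻¹))ᴴ = (Matrix.diagonal fun i => (star (a i : K))⁻¹) := by
    rw [Matrix.diagonal_conjTranspose]
    exact congrArg Matrix.diagonal (funext fun i => star_inv₀ _)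
  have hDasiH : ((Matrix.diagonal fun i => (star (a i : K))⁻¹))ᴴ = (Matrix.diagonal fun i => ((a i : K))⁻¹) := by
    rw [Matrix.diagonal_conjTranspose]
    exact congrArg Matrix.diagonal (funext fun i =>
      show star ((star (a i : K))⁻¹) = ((a i : K))⁻¹ by rw [star_inv₀, star_star])
  have hDaH : ((Matrix.diagonal fun i => (a i : K)))ᴴ = (Matrix.diagonal fun i => star (a i : K)) := by
    rw [Matrix.diagonal_conjTranspose]
    rfl
  have hDasH : ((Matrix.diagonal fun i => star (a i : K)))ᴴ = (Matrix.diagonal fun i => (a i : K)) := by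
    rw [Matrix.diagonal_conjTranspose]
    exact congrArg Matrix.diagonal (funext fun i => star_star _)
  have hTinv : (Matrix.fromBlocks (Matrix.diagonal fun i => (a i : K)) 0 0 (Matrix.diagonal fun i => (star (a i : K))⁻¹))⁻¹
      = Matrix.fromBlocks (Matrix.diagonal fun i => ((a i : K))⁻¹) 0 0 (Matrix.diagonal fun i => star (a i : K)) := by
    apply Matrix.inv_eq_right_inv
    rw [Matrix.fromBlocks_multiply]
    simp only [Matrix.mul_zero, Matrix.zero_mul, add_zero, zero_add]
    rw [hDaDai, hDasiDas, Matrix.fromBlocks_one]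
  have hAinv : (Matrix.diagonal
        (Sum.elim (fun i => (a i : K)) (fun _ : Fin (n - m) => (d : K))))⁻¹
      = Matrix.fromBlocks (Matrix.diagonal fun i => ((a i : K))⁻¹) 0 0 (Matrix.diagonal fun _ : Fin (n - m) => ((d : K))⁻¹) := by
    apply Matrix.inv_eq_right_inv
    rw [← Matrix.fromBlocks_diagonal, Matrix.fromBlocks_multiply]
    simp only [Matrix.mul_zero, Matrix.zero_mul, add_zero, zero_add]
    rw [hDaDai, hDdDdi, Matrix.fromBlocks_one]
  ext X
  simp only [Set.mem_setOf_eq, Set.mem_inter_iff]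
  constructor
  · rintro ⟨u, hu, V, ⟨Z₃, Z₄, hZ₃, hZ₄, rfl⟩, b, hb, rfl⟩
    rw [hTinv]
    have hW : Matrix.fromBlocks (Matrix.diagonal fun i => ((a i : K))⁻¹) 0 0 (Matrix.diagonal fun i => star (a i : K)) * Matrix.fromBlocks (1 : Matrix (Fin m) (Fin m) K) 0 Z₃ Z₄
        = Matrix.fromBlocks (Matrix.diagonal fun i => ((a i : K))⁻¹) 0 ((Matrix.diagonal fun i => star (a i : K)) * Z₃) ((Matrix.diagonal fun i => star (a i : K)) * Z₄) := by
      rw [Matrix.fromBlocks_multiply]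
      simp only [Matrix.mul_zero, Matrix.zero_mul, add_zero, zero_add, Matrix.mul_one]
    rw [Matrix.mul_assoc u, hW]
    constructor
    · rw [sandwich u (Jmat K m) (Matrix.fromBlocks (Matrix.diagonal fun i => ((a i : K))⁻¹) 0 ((Matrix.diagonal fun i => star (a i : K)) * Z₃) ((Matrix.diagonal fun i => star (a i : K)) * Z₄)) b
        hu.2.2.2.2, herm_form]
      refine memO_mul (memO_mul (memO_conjTranspose hOstar hb.1) ?_) hb.1
      rw [lemA (fun i => (a i : K)) haK Z₃, lemB (fun i => (a i : K)) hsaK Z₃,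
        lemA (fun i => (a i : K)) haK Z₄, lemB (fun i => (a i : K)) hsaK Z₄]
      exact memO_fromBlocks (memO_add (memO_conjTranspose hOstar hZ₃) hZ₃) hZ₄
        (memO_conjTranspose hOstar hZ₄) memO_zero
    · refine ⟨u, hu, Matrix.fromBlocks 1 0 ((Matrix.diagonal fun i => star (a i : K)) * Z₃ * (Matrix.diagonal fun i => (a i : K))) ((Matrix.diagonal fun i => star (a i : K)) * Z₄ * (Matrix.diagonal fun _ : Fin (n - m) => (d : K))),
        ⟨(Matrix.diagonal fun i => star (a i : K)) * Z₃ * (Matrix.diagonal fun i => (a i : K)), (Matrix.diagonal fun i => star (a i : K)) * Z₄ * (Matrix.diagonal fun _ : Fin (n - m) => (d : K)), ?_, ?_, rfl⟩, b, hb, ?_⟩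
      · intro i j
        have h1 : ((Matrix.diagonal fun i => star (a i : K)) * Z₃ * (Matrix.diagonal fun i => (a i : K))) i j = (star (a i : K) * (a j : K)) * Z₃ i j := by
          simp only [Matrix.mul_diagonal, Matrix.diagonal_mul]
          ring
        rw [h1]
        exact mul_mem (haa i j) (hZ₃ i j)
      · intro i j
        have h1 : ((Matrix.diagonal fun i => star (a i : K)) * Z₄ * (Matrix.diagonal fun _ : Fin (n - m) => (d : K))) i j = (star (a i : K) * (d : K)) * Z₄ i j := by
          simp only [Matrix.mul_diagonal, Matrix.diagonal_mul]
          ring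
        rw [h1]
        exact mul_mem (had' i) (hZ₄ i j)
      · rw [hAinv]
        have key : Matrix.fromBlocks (Matrix.diagonal fun i => ((a i : K))⁻¹) 0 ((Matrix.diagonal fun i => star (a i : K)) * Z₃) ((Matrix.diagonal fun i => star (a i : K)) * Z₄)
            = Matrix.fromBlocks 1 0 ((Matrix.diagonal fun i => star (a i : K)) * Z₃ * (Matrix.diagonal fun i => (a i : K))) ((Matrix.diagonal fun i => star (a i : K)) * Z₄ * (Matrix.diagonal fun _ : Fin (n - m) => (d : K)))
              * Matrix.fromBlocks (Matrix.diagonal fun i => ((a i : K))⁻¹) 0 0 (Matrix.diagonal fun _ : Fin (n - m) => ((d : K))⁻¹) := by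
          rw [Matrix.fromBlocks_multiply]
          simp only [Matrix.mul_zero, Matrix.zero_mul, add_zero, zero_add, Matrix.one_mul]
          rw [Matrix.mul_assoc ((Matrix.diagonal fun i => star (a i : K)) * Z₃), hDaDai, Matrix.mul_one,
            Matrix.mul_assoc ((Matrix.diagonal fun i => star (a i : K)) * Z₄), hDdDdi, Matrix.mul_one]
        rw [key, ← Matrix.mul_assoc u]
  · rintro ⟨hmem, u, hu, V, ⟨Z₃, Z₄, hZ₃, hZ₄, rfl⟩, b, hb, rfl⟩
    rw [hAinv] at hmem ⊢
    rw [Matrix.mul_assoc u (Matrix.fromBlocks 1 0 Z₃ Z₄)] at hmem ⊢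
    have hVA : Matrix.fromBlocks 1 0 Z₃ Z₄ * Matrix.fromBlocks (Matrix.diagonal fun i => ((a i : K))⁻¹) 0 0 (Matrix.diagonal fun _ : Fin (n - m) => ((d : K))⁻¹)
        = Matrix.fromBlocks (Matrix.diagonal fun i => ((a i : K))⁻¹) 0 (Z₃ * (Matrix.diagonal fun i => ((a i : K))⁻¹)) (Z₄ * (Matrix.diagonal fun _ : Fin (n - m) => ((d : K))⁻¹)) := by
      rw [Matrix.fromBlocks_multiply]
      simp only [Matrix.mul_zero, Matrix.zero_mul, add_zero, zero_add, Matrix.one_mul]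
    rw [hVA] at hmem ⊢
    rw [sandwich u (Jmat K m) (Matrix.fromBlocks (Matrix.diagonal fun i => ((a i : K))⁻¹) 0 (Z₃ * (Matrix.diagonal fun i => ((a i : K))⁻¹)) (Z₄ * (Matrix.diagonal fun _ : Fin (n - m) => ((d : K))⁻¹))) b
      hu.2.2.2.2, herm_form, hDaiH] at hmem
    obtain ⟨c, hc, hbc, hcb⟩ := bo_inv hb
    have h2c : cᴴ * bᴴ = 1 := by
      rw [← Matrix.conjTranspose_mul, hbc, Matrix.conjTranspose_one]
    have hsand : ∀ M0 : Matrix (Fin m ⊕ Fin (n - m)) (Fin m ⊕ Fin (n - m)) K,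
        cᴴ * (bᴴ * M0 * b) * c = M0 := by
      intro M0
      calc cᴴ * (bᴴ * M0 * b) * c = (cᴴ * bᴴ) * (M0 * (b * c)) := by
            simp only [Matrix.mul_assoc]
        _ = M0 := by rw [h2c, hbc, Matrix.one_mul, Matrix.mul_one]
    have hM : MemO O (Matrix.fromBlocks
        ((Z₃ * (Matrix.diagonal fun i => ((a i : K))⁻¹))ᴴ * (Matrix.diagonal fun i => ((a i : K))⁻¹) + (Matrix.diagonal fun i => (star (a i : K))⁻¹) * (Z₃ * (Matrix.diagonal fun i => ((a i : K))⁻¹)))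
        ((Matrix.diagonal fun i => (star (a i : K))⁻¹) * (Z₄ * (Matrix.diagonal fun _ : Fin (n - m) => ((d : K))⁻¹))) ((Z₄ * (Matrix.diagonal fun _ : Fin (n - m) => ((d : K))⁻¹))ᴴ * (Matrix.diagonal fun i => ((a i : K))⁻¹)) 0) := by
      have h := memO_mul (memO_mul (memO_conjTranspose hOstar hc) hmem) hc
      rwa [hsand] at h
    have hEmem : MemO O ((Z₃ * (Matrix.diagonal fun i => ((a i : K))⁻¹))ᴴ * (Matrix.diagonal fun i => ((a i : K))⁻¹) + (Matrix.diagonal fun i => (star (a i : K))⁻¹) * (Z₃ * (Matrix.diagonal fun i => ((a i : K))⁻¹))) := fun i j => by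
      have h := hM (Sum.inl i) (Sum.inl j)
      rwa [Matrix.fromBlocks_apply₁₁] at h
    have hZ4'mem : MemO O ((Matrix.diagonal fun i => (star (a i : K))⁻¹) * (Z₄ * (Matrix.diagonal fun _ : Fin (n - m) => ((d : K))⁻¹))) := fun i j => by
      have h := hM (Sum.inl i) (Sum.inr j)
      rwa [Matrix.fromBlocks_apply₁₂] at h
    have hEentry : ∀ i j, (((Z₃ * (Matrix.diagonal fun i => ((a i : K))⁻¹))ᴴ * (Matrix.diagonal fun i => ((a i : K))⁻¹) + (Matrix.diagonal fun i => (star (a i : K))⁻¹) * (Z₃ * (Matrix.diagonal fun i => ((a i : K))⁻¹)))) i j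
        = star (Z₃ j i) * (star (a i : K))⁻¹ * ((a j : K))⁻¹
          + (star (a i : K))⁻¹ * Z₃ i j * ((a j : K))⁻¹ := by
      intro i j
      simp only [Matrix.add_apply, Matrix.mul_diagonal, Matrix.diagonal_mul,
        Matrix.conjTranspose_apply, star_mul', star_inv₀]
      ring
    have hEH : (((Z₃ * (Matrix.diagonal fun i => ((a i : K))⁻¹))ᴴ * (Matrix.diagonal fun i => ((a i : K))⁻¹) + (Matrix.diagonal fun i => (star (a i : K))⁻¹) * (Z₃ * (Matrix.diagonal fun i => ((a i : K))⁻¹))))ᴴ = ((Z₃ * (Matrix.diagonal fun i => ((a i : K))⁻¹))ᴴ * (Matrix.diagonal fun i => ((a i : K))⁻¹) + (Matrix.diagonal fun i => (star (a i : K))⁻¹) * (Z₃ * (Matrix.diagonal fun i => ((a i : K))⁻¹))) := by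
      ext i j
      rw [Matrix.conjTranspose_apply, hEentry, hEentry]
      simp only [star_add, star_mul', star_inv₀, star_star]
      ring
    have hDasEDa : (Matrix.diagonal fun i => star (a i : K)) * ((Z₃ * (Matrix.diagonal fun i => ((a i : K))⁻¹))ᴴ * (Matrix.diagonal fun i => ((a i : K))⁻¹) + (Matrix.diagonal fun i => (star (a i : K))⁻¹) * (Z₃ * (Matrix.diagonal fun i => ((a i : K))⁻¹))) * (Matrix.diagonal fun i => (a i : K)) = Z₃ᴴ + Z₃ := by
      ext i j
      have h5 := hsaK i
      have h6 := haK j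
      rw [Matrix.mul_diagonal, Matrix.diagonal_mul, hEentry]
      simp only [Matrix.add_apply, Matrix.conjTranspose_apply]
      have e : ∀ x y : K, star (a i : K) * (x * (star (a i : K))⁻¹ * ((a j : K))⁻¹
          + (star (a i : K))⁻¹ * y * ((a j : K))⁻¹) * (a j : K) = x + y := by
        intro x y
        rw [mul_add, add_mul]
        congr 1
        · rw [show star (a i : K) * (x * (star (a i : K))⁻¹ * ((a j : K))⁻¹) * (a j : K)
              = x * (star (a i : K) * (star (a i : K))⁻¹) * (((a j : K))⁻¹ * (a j : K)) from
                by ring,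
            mul_inv_cancel₀ h5, inv_mul_cancel₀ h6, mul_one, mul_one]
        · rw [show star (a i : K) * ((star (a i : K))⁻¹ * y * ((a j : K))⁻¹) * (a j : K)
              = y * (star (a i : K) * (star (a i : K))⁻¹) * (((a j : K))⁻¹ * (a j : K)) from
                by ring,
            mul_inv_cancel₀ h5, inv_mul_cancel₀ h6, mul_one, mul_one]
      exact e _ _
    have hZ3'mem : MemO O (t • ((Z₃ * (Matrix.diagonal fun i => ((a i : K))⁻¹))ᴴ * (Matrix.diagonal fun i => ((a i : K))⁻¹) + (Matrix.diagonal fun i => (star (a i : K))⁻¹) * (Z₃ * (Matrix.diagonal fun i => ((a i : K))⁻¹)))) := fun i j => by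
      rw [Matrix.smul_apply, smul_eq_mul]
      exact mul_mem htO (hEmem i j)
    have hCmem : MemO O (Z₃ - (Matrix.diagonal fun i => star (a i : K)) * (t • ((Z₃ * (Matrix.diagonal fun i => ((a i : K))⁻¹))ᴴ * (Matrix.diagonal fun i => ((a i : K))⁻¹) + (Matrix.diagonal fun i => (star (a i : K))⁻¹) * (Z₃ * (Matrix.diagonal fun i => ((a i : K))⁻¹)))) * (Matrix.diagonal fun i => (a i : K))) := by
      intro i j
      rw [Matrix.sub_apply, Matrix.mul_diagonal, Matrix.diagonal_mul, Matrix.smul_apply,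
        smul_eq_mul]
      have h1 : star (a i : K) * (t * (((Z₃ * (Matrix.diagonal fun i => ((a i : K))⁻¹))ᴴ * (Matrix.diagonal fun i => ((a i : K))⁻¹) + (Matrix.diagonal fun i => (star (a i : K))⁻¹) * (Z₃ * (Matrix.diagonal fun i => ((a i : K))⁻¹)))) i j) * (a j : K)
          = (star (a i : K) * (a j : K)) * (t * (((Z₃ * (Matrix.diagonal fun i => ((a i : K))⁻¹))ᴴ * (Matrix.diagonal fun i => ((a i : K))⁻¹) + (Matrix.diagonal fun i => (star (a i : K))⁻¹) * (Z₃ * (Matrix.diagonal fun i => ((a i : K))⁻¹)))) i j) := by ring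
      rw [h1]
      exact sub_mem (hZ₃ i j) (mul_mem (haa i j) (mul_mem htO (hEmem i j)))
    have hPH : ((Matrix.diagonal fun i => star (a i : K)) * (t • ((Z₃ * (Matrix.diagonal fun i => ((a i : K))⁻¹))ᴴ * (Matrix.diagonal fun i => ((a i : K))⁻¹) + (Matrix.diagonal fun i => (star (a i : K))⁻¹) * (Z₃ * (Matrix.diagonal fun i => ((a i : K))⁻¹)))) * (Matrix.diagonal fun i => (a i : K)))ᴴ = (Matrix.diagonal fun i => star (a i : K)) * (t • ((Z₃ * (Matrix.diagonal fun i => ((a i : K))⁻¹))ᴴ * (Matrix.diagonal fun i => ((a i : K))⁻¹) + (Matrix.diagonal fun i => (star (a i : K))⁻¹) * (Z₃ * (Matrix.diagonal fun i => ((a i : K))⁻¹)))) * (Matrix.diagonal fun i => (a i : K)) := by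
      rw [Matrix.conjTranspose_mul, Matrix.conjTranspose_mul, Matrix.conjTranspose_smul,
        hEH, hstart, hDaH, hDasH, ← Matrix.mul_assoc]
    have hP : (Matrix.diagonal fun i => star (a i : K)) * (t • ((Z₃ * (Matrix.diagonal fun i => ((a i : K))⁻¹))ᴴ * (Matrix.diagonal fun i => ((a i : K))⁻¹) + (Matrix.diagonal fun i => (star (a i : K))⁻¹) * (Z₃ * (Matrix.diagonal fun i => ((a i : K))⁻¹)))) * (Matrix.diagonal fun i => (a i : K)) = t • (Z₃ᴴ + Z₃) := by
      rw [Matrix.mul_smul, Matrix.smul_mul, hDasEDa]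
    have hCskew : (Z₃ - (Matrix.diagonal fun i => star (a i : K)) * (t • ((Z₃ * (Matrix.diagonal fun i => ((a i : K))⁻¹))ᴴ * (Matrix.diagonal fun i => ((a i : K))⁻¹) + (Matrix.diagonal fun i => (star (a i : K))⁻¹) * (Z₃ * (Matrix.diagonal fun i => ((a i : K))⁻¹)))) * (Matrix.diagonal fun i => (a i : K))) + ((Z₃ - (Matrix.diagonal fun i => star (a i : K)) * (t • ((Z₃ * (Matrix.diagonal fun i => ((a i : K))⁻¹))ᴴ * (Matrix.diagonal fun i => ((a i : K))⁻¹) + (Matrix.diagonal fun i => (star (a i : K))⁻¹) * (Z₃ * (Matrix.diagonal fun i => ((a i : K))⁻¹)))) * (Matrix.diagonal fun i => (a i : K))))ᴴ = 0 := by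
      rw [Matrix.conjTranspose_sub, hPH, hP]
      have htt : t • ((Z₃ᴴ + Z₃) : Matrix (Fin m) (Fin m) K) + t • (Z₃ᴴ + Z₃)
          = Z₃ᴴ + Z₃ := by
        rw [← add_smul, ← two_mul, h2t, one_smul]
      calc Z₃ - t • (Z₃ᴴ + Z₃) + (Z₃ᴴ - t • (Z₃ᴴ + Z₃))
          = (Z₃ᴴ + Z₃) - (t • (Z₃ᴴ + Z₃) + t • (Z₃ᴴ + Z₃)) := by abel
        _ = 0 := by rw [htt, sub_self]
    rw [hTinv]
    refine ⟨u * Matrix.fromBlocks 1 0 (Z₃ - (Matrix.diagonal fun i => star (a i : K)) * (t • ((Z₃ * (Matrix.diagonal fun i => ((a i : K))⁻¹))ᴴ * (Matrix.diagonal fun i => ((a i : K))⁻¹) + (Matrix.diagonal fun i => (star (a i : K))⁻¹) * (Z₃ * (Matrix.diagonal fun i => ((a i : K))⁻¹)))) * (Matrix.diagonal fun i => (a i : K))) 1, uneg_mul_unipotent hu hCmem hCskew,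
      Matrix.fromBlocks 1 0 (t • ((Z₃ * (Matrix.diagonal fun i => ((a i : K))⁻¹))ᴴ * (Matrix.diagonal fun i => ((a i : K))⁻¹) + (Matrix.diagonal fun i => (star (a i : K))⁻¹) * (Z₃ * (Matrix.diagonal fun i => ((a i : K))⁻¹)))) ((Matrix.diagonal fun i => (star (a i : K))⁻¹) * (Z₄ * (Matrix.diagonal fun _ : Fin (n - m) => ((d : K))⁻¹))),
      ⟨t • ((Z₃ * (Matrix.diagonal fun i => ((a i : K))⁻¹))ᴴ * (Matrix.diagonal fun i => ((a i : K))⁻¹) + (Matrix.diagonal fun i => (star (a i : K))⁻¹) * (Z₃ * (Matrix.diagonal fun i => ((a i : K))⁻¹))), ((Matrix.diagonal fun i => (star (a i : K))⁻¹) * (Z₄ * (Matrix.diagonal fun _ : Fin (n - m) => ((d : K))⁻¹))), hZ3'mem, hZ4'mem, rfl⟩, b, hb, ?_⟩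
    have hTV' : Matrix.fromBlocks (Matrix.diagonal fun i => ((a i : K))⁻¹) 0 0 (Matrix.diagonal fun i => star (a i : K))
          * Matrix.fromBlocks (1 : Matrix (Fin m) (Fin m) K) 0 (t • ((Z₃ * (Matrix.diagonal fun i => ((a i : K))⁻¹))ᴴ * (Matrix.diagonal fun i => ((a i : K))⁻¹) + (Matrix.diagonal fun i => (star (a i : K))⁻¹) * (Z₃ * (Matrix.diagonal fun i => ((a i : K))⁻¹)))) ((Matrix.diagonal fun i => (star (a i : K))⁻¹) * (Z₄ * (Matrix.diagonal fun _ : Fin (n - m) => ((d : K))⁻¹)))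
        = Matrix.fromBlocks (Matrix.diagonal fun i => ((a i : K))⁻¹) 0 ((Matrix.diagonal fun i => star (a i : K)) * (t • ((Z₃ * (Matrix.diagonal fun i => ((a i : K))⁻¹))ᴴ * (Matrix.diagonal fun i => ((a i : K))⁻¹) + (Matrix.diagonal fun i => (star (a i : K))⁻¹) * (Z₃ * (Matrix.diagonal fun i => ((a i : K))⁻¹))))) ((Matrix.diagonal fun i => star (a i : K)) * ((Matrix.diagonal fun i => (star (a i : K))⁻¹) * (Z₄ * (Matrix.diagonal fun _ : Fin (n - m) => ((d : K))⁻¹)))) := by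
      rw [Matrix.fromBlocks_multiply]
      simp only [Matrix.mul_zero, Matrix.zero_mul, add_zero, zero_add, Matrix.mul_one]
    have hgTV' : Matrix.fromBlocks (1 : Matrix (Fin m) (Fin m) K) 0 (Z₃ - (Matrix.diagonal fun i => star (a i : K)) * (t • ((Z₃ * (Matrix.diagonal fun i => ((a i : K))⁻¹))ᴴ * (Matrix.diagonal fun i => ((a i : K))⁻¹) + (Matrix.diagonal fun i => (star (a i : K))⁻¹) * (Z₃ * (Matrix.diagonal fun i => ((a i : K))⁻¹)))) * (Matrix.diagonal fun i => (a i : K))) (1 : Matrix (Fin m) (Fin m) K)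
          * Matrix.fromBlocks (Matrix.diagonal fun i => ((a i : K))⁻¹) 0 ((Matrix.diagonal fun i => star (a i : K)) * (t • ((Z₃ * (Matrix.diagonal fun i => ((a i : K))⁻¹))ᴴ * (Matrix.diagonal fun i => ((a i : K))⁻¹) + (Matrix.diagonal fun i => (star (a i : K))⁻¹) * (Z₃ * (Matrix.diagonal fun i => ((a i : K))⁻¹))))) ((Matrix.diagonal fun i => star (a i : K)) * ((Matrix.diagonal fun i => (star (a i : K))⁻¹) * (Z₄ * (Matrix.diagonal fun _ : Fin (n - m) => ((d : K))⁻¹))))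
        = Matrix.fromBlocks (Matrix.diagonal fun i => ((a i : K))⁻¹) 0 (Z₃ * (Matrix.diagonal fun i => ((a i : K))⁻¹)) (Z₄ * (Matrix.diagonal fun _ : Fin (n - m) => ((d : K))⁻¹)) := by
      rw [Matrix.fromBlocks_multiply]
      simp only [Matrix.mul_zero, Matrix.zero_mul, add_zero, zero_add, Matrix.one_mul]
      rw [Matrix.sub_mul, Matrix.mul_assoc ((Matrix.diagonal fun i => star (a i : K)) * (t • ((Z₃ * (Matrix.diagonal fun i => ((a i : K))⁻¹))ᴴ * (Matrix.diagonal fun i => ((a i : K))⁻¹) + (Matrix.diagonal fun i => (star (a i : K))⁻¹) * (Z₃ * (Matrix.diagonal fun i => ((a i : K))⁻¹))))), hDaDai, Matrix.mul_one,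
        sub_add_cancel, ← Matrix.mul_assoc (Matrix.diagonal fun i => star (a i : K)) (Matrix.diagonal fun i => (star (a i : K))⁻¹), hDasDasi, Matrix.one_mul]
    rw [Matrix.mul_assoc (u * Matrix.fromBlocks 1 0 (Z₃ - (Matrix.diagonal fun i => star (a i : K)) * (t • ((Z₃ * (Matrix.diagonal fun i => ((a i : K))⁻¹))ᴴ * (Matrix.diagonal fun i => ((a i : K))⁻¹) + (Matrix.diagonal fun i => (star (a i : K))⁻¹) * (Z₃ * (Matrix.diagonal fun i => ((a i : K))⁻¹)))) * (Matrix.diagonal fun i => (a i : K))) 1), hTV',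
      Matrix.mul_assoc u (Matrix.fromBlocks 1 0 (Z₃ - (Matrix.diagonal fun i => star (a i : K)) * (t • ((Z₃ * (Matrix.diagonal fun i => ((a i : K))⁻¹))ᴴ * (Matrix.diagonal fun i => ((a i : K))⁻¹) + (Matrix.diagonal fun i => (star (a i : K))⁻¹) * (Z₃ * (Matrix.diagonal fun i => ((a i : K))⁻¹)))) * (Matrix.diagonal fun i => (a i : K))) 1), hgTV']
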